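/- Amalgamation of n-elementary and elementary extensions: if A ⪯ₙ B (A is an n-elementary substructure of B) and A ⪯ A′ (an elementary extension), then there exists a structure B′ with an elementary embedding of B into B′ and an n-elementary embedding of A′ into B′ compatible with the inclusions of A. -/

import Mathlib

open FirstOrder

universe u

namespace InfinitaryForcing

variable (L : FirstOrder.Language.{u, u})

/-- Infinitary formulas of `L_{∞,ω}`: set-indexed conjunctions and disjunctions,
finitary quantification, free variables among `Fin n`. -/
inductive InfForm : ℕ → Type (u + 1)
  | equal {n : ℕ} (t₁ t₂ : L.Term (Fin n)) : InfForm n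
  | rel {n l : ℕ} (R : L.Relations l) (ts : Fin l → L.Term (Fin n)) : InfForm n
  | not {n : ℕ} (φ : InfForm n) : InfForm n
  | disj {n : ℕ} {ι : Type u} (Φ : ι → InfForm n) : InfForm n
  | conj {n : ℕ} {ι : Type u} (Φ : ι → InfForm n) : InfForm n
  | ex {n : ℕ} (φ : InfForm (n + 1)) : InfForm n
  | all {n : ℕ} (φ : InfForm (n + 1)) : InfForm n

variable {L}

/-- Tarskian satisfaction for infinitary formulas. -/
def Realize : ∀ {n : ℕ}, InfForm L n → ∀ (M : Type u), L.Structure M → (Fin n → M) → Prop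
  | _, .equal t₁ t₂, _M, S, v => letI := S; t₁.realize v = t₂.realize v
  | _, .rel R ts, _M, S, v => letI := S; Language.Structure.RelMap R fun i => (ts i).realize v
  | _, .not φ, M, S, v => ¬ Realize φ M S v
  | _, .disj Φ, M, S, v => ∃ i, Realize (Φ i) M S v
  | _, .conj Φ, M, S, v => ∀ i, Realize (Φ i) M S v
  | _, .ex φ, M, S, v => ∃ b : M, Realize φ M S (Fin.snoc v b)
  | _, .all φ, M, S, v => ∀ b : M, Realize φ M S (Fin.snoc v b)

/-- Elementary embeddings, with the structures made explicit. -/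
abbrev ElemEmb (M N : Type u) (SM : L.Structure M) (SN : L.Structure N) : Type u :=
  @FirstOrder.Language.ElementaryEmbedding L M N SM SN

/-- The strong forcing relation `A ⊩ ψ(ā)`, where conditions are structures
ordered by elementary extension. -/
def Forces : ∀ {n : ℕ}, InfForm L n → ∀ (M : Type u), L.Structure M → (Fin n → M) → Prop
  | _, .equal t₁ t₂, _M, S, v => letI := S; t₁.realize v = t₂.realize v
  | _, .rel R ts, _M, S, v => letI := S; Language.Structure.RelMap R fun i => (ts i).realize v
  | _, .not φ, M, S, v =>
      ∀ (N : Type u) (SN : L.Structure N) (f : ElemEmb M N S SN),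
        ¬ Forces φ N SN (fun i => f.toFun (v i))
  | _, .disj Φ, M, S, v => ∃ i, Forces (Φ i) M S v
  | _, .conj Φ, M, S, v =>
      ∀ (N : Type u) (SN : L.Structure N) (f : ElemEmb M N S SN) (i : _),
        ∃ (P : Type u) (SP : L.Structure P) (g : ElemEmb N P SN SP),
          Forces (Φ i) P SP (fun k => g.toFun (f.toFun (v k)))
  | _, .ex φ, M, S, v => ∃ b : M, Forces φ M S (Fin.snoc v b)
  | _, .all φ, M, S, v =>
      ∀ (N : Type u) (SN : L.Structure N) (f : ElemEmb M N S SN) (b : N),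
        ∃ (P : Type u) (SP : L.Structure P) (g : ElemEmb N P SN SP),
          Forces φ P SP (Fin.snoc (fun k => g.toFun (f.toFun (v k))) (g.toFun b))

/-- `M` decides `ψ(v)` if it strongly forces `ψ(v)` or `¬ψ(v)`. -/
def Decides {n : ℕ} (ψ : InfForm L n) (M : Type u) (S : L.Structure M) (v : Fin n → M) : Prop :=
  Forces ψ M S v ∨ Forces ψ.not M S v

/-- The weak forcing relation `A ⊩* ψ := A ⊩ ¬¬ψ`. -/
def WForces {n : ℕ} (ψ : InfForm L n) (M : Type u) (S : L.Structure M) (v : Fin n → M) : Prop :=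
  Forces ψ.not.not M S v

variable (L)

/-- Finitary (`L_{ω,ω}`) formulas among the infinitary ones. -/
inductive InfForm.IsFinitary : ∀ {n : ℕ}, InfForm L n → Prop
  | equal {n} (t₁ t₂ : L.Term (Fin n)) : IsFinitary (.equal t₁ t₂)
  | rel {n l} (R : L.Relations l) (ts : Fin l → L.Term (Fin n)) : IsFinitary (.rel R ts)
  | not {n} {φ : InfForm L n} : IsFinitary φ → IsFinitary φ.not
  | disj {n} {ι : Type u} (_ : Finite ι) {Φ : ι → InfForm L n} :
      (∀ i, IsFinitary (Φ i)) → IsFinitary (.disj Φ)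
  | conj {n} {ι : Type u} (_ : Finite ι) {Φ : ι → InfForm L n} :
      (∀ i, IsFinitary (Φ i)) → IsFinitary (.conj Φ)
  | ex {n} {φ : InfForm L (n + 1)} : IsFinitary φ → IsFinitary φ.ex
  | all {n} {φ : InfForm L (n + 1)} : IsFinitary φ → IsFinitary φ.all

/-- Quantifier-free infinitary formulas. -/
inductive InfForm.IsQF : ∀ {n : ℕ}, InfForm L n → Prop
  | equal {n} (t₁ t₂ : L.Term (Fin n)) : IsQF (.equal t₁ t₂)
  | rel {n l} (R : L.Relations l) (ts : Fin l → L.Term (Fin n)) : IsQF (.rel R ts)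
  | not {n} {φ : InfForm L n} : IsQF φ → IsQF φ.not
  | disj {n} {ι : Type u} {Φ : ι → InfForm L n} : (∀ i, IsQF (Φ i)) → IsQF (.disj Φ)
  | conj {n} {ι : Type u} {Φ : ι → InfForm L n} : (∀ i, IsQF (Φ i)) → IsQF (.conj Φ)

/-- `L_{ω₁,ω}` formulas: all conjunctions and disjunctions are countable. -/
inductive InfForm.IsCtble : ∀ {n : ℕ}, InfForm L n → Prop
  | equal {n} (t₁ t₂ : L.Term (Fin n)) : IsCtble (.equal t₁ t₂)
  | rel {n l} (R : L.Relations l) (ts : Fin l → L.Term (Fin n)) : IsCtble (.rel R ts)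
  | not {n} {φ : InfForm L n} : IsCtble φ → IsCtble φ.not
  | disj {n} {ι : Type u} (_ : Countable ι) {Φ : ι → InfForm L n} :
      (∀ i, IsCtble (Φ i)) → IsCtble (.disj Φ)
  | conj {n} {ι : Type u} (_ : Countable ι) {Φ : ι → InfForm L n} :
      (∀ i, IsCtble (Φ i)) → IsCtble (.conj Φ)
  | ex {n} {φ : InfForm L (n + 1)} : IsCtble φ → IsCtble φ.ex
  | all {n} {φ : InfForm L (n + 1)} : IsCtble φ → IsCtble φ.all

/-- A fragment of `L_{∞,ω}`: a family of sets of formulas closed under negation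
and subformulas. -/
structure IsFragment (𝔸 : ∀ n : ℕ, Set (InfForm L n)) : Prop where
  not_mem : ∀ {n} {φ : InfForm L n}, φ ∈ 𝔸 n → φ.not ∈ 𝔸 n
  of_not : ∀ {n} {φ : InfForm L n}, φ.not ∈ 𝔸 n → φ ∈ 𝔸 n
  of_disj : ∀ {n} {ι : Type u} {Φ : ι → InfForm L n}, InfForm.disj Φ ∈ 𝔸 n → ∀ i, Φ i ∈ 𝔸 n
  of_conj : ∀ {n} {ι : Type u} {Φ : ι → InfForm L n}, InfForm.conj Φ ∈ 𝔸 n → ∀ i, Φ i ∈ 𝔸 n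
  of_ex : ∀ {n} {φ : InfForm L (n + 1)}, φ.ex ∈ 𝔸 n → φ ∈ 𝔸 (n + 1)
  of_all : ∀ {n} {φ : InfForm L (n + 1)}, φ.all ∈ 𝔸 n → φ ∈ 𝔸 (n + 1)

variable {L}

/-- `G` is `𝔸`-generic if it decides every instance of every formula of `𝔸`. -/
def IsGeneric (𝔸 : ∀ n : ℕ, Set (InfForm L n)) (G : Type u) (SG : L.Structure G) : Prop :=
  ∀ (n : ℕ) (ψ : InfForm L n), ψ ∈ 𝔸 n → ∀ v : Fin n → G, Decides ψ G SG v

variable (L)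

mutual
  /-- Finitary `∃ₙ` formulas: `n` alternating blocks of quantifiers beginning
  with existentials, counting finite conjunctions/disjunctions as free. -/
  inductive IsEx : ℕ → ∀ {k : ℕ}, InfForm L k → Prop
    | equal {m k} (t₁ t₂ : L.Term (Fin k)) : IsEx m (.equal t₁ t₂)
    | rel {m k l} (R : L.Relations l) (ts : Fin l → L.Term (Fin k)) : IsEx m (.rel R ts)
    | not {m k} {φ : InfForm L k} : IsAll m φ → IsEx m φ.not
    | disj {m k} {ι : Type u} (_ : Finite ι) {Φ : ι → InfForm L k} :
        (∀ i, IsEx m (Φ i)) → IsEx m (.disj Φ)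
    | conj {m k} {ι : Type u} (_ : Finite ι) {Φ : ι → InfForm L k} :
        (∀ i, IsEx m (Φ i)) → IsEx m (.conj Φ)
    | ex {m k} {φ : InfForm L (k + 1)} : IsEx m φ → 1 ≤ m → IsEx m φ.ex
    | exStep {m k} {φ : InfForm L (k + 1)} : IsAll m φ → IsEx (m + 1) φ.ex

  /-- Finitary `∀ₙ` formulas. -/
  inductive IsAll : ℕ → ∀ {k : ℕ}, InfForm L k → Prop
    | equal {m k} (t₁ t₂ : L.Term (Fin k)) : IsAll m (.equal t₁ t₂)
    | rel {m k l} (R : L.Relations l) (ts : Fin l → L.Term (Fin k)) : IsAll m (.rel R ts)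
    | not {m k} {φ : InfForm L k} : IsEx m φ → IsAll m φ.not
    | disj {m k} {ι : Type u} (_ : Finite ι) {Φ : ι → InfForm L k} :
        (∀ i, IsAll m (Φ i)) → IsAll m (.disj Φ)
    | conj {m k} {ι : Type u} (_ : Finite ι) {Φ : ι → InfForm L k} :
        (∀ i, IsAll m (Φ i)) → IsAll m (.conj Φ)
    | all {m k} {φ : InfForm L (k + 1)} : IsAll m φ → 1 ≤ m → IsAll m φ.all
    | allStep {m k} {φ : InfForm L (k + 1)} : IsEx m φ → IsAll (m + 1) φ.all
end

/-- `f : A → B` is an `n`-elementary map (`A ⪯ₙ B` when `f` is an inclusion):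
every finitary `∃ₙ` or `∀ₙ` formula transfers along `f`. -/
def IsNElemMap (n : ℕ) {A B : Type u} (SA : L.Structure A) (SB : L.Structure B)
    (f : A → B) : Prop :=
  ∀ (k : ℕ) (φ : InfForm L k), (IsEx L n φ ∨ IsAll L n φ) →
    ∀ v : Fin k → A, Realize φ A SA v ↔ Realize φ B SB (fun i => f (v i))

/-- `f : A → B` is an elementary map: every finitary formula transfers along `f`. -/
def IsElemMap {A B : Type u} (SA : L.Structure A) (SB : L.Structure B)
    (f : A → B) : Prop :=
  ∀ (k : ℕ) (φ : InfForm L k), InfForm.IsFinitary L φ →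
    ∀ v : Fin k → A, Realize φ A SA v ↔ Realize φ B SB (fun i => f (v i))

/-! Compactness. Name the elements of `B` and `A'` by new constants and take the elementary
diagram of `B`, the `∃ₙ`/`∀ₙ`-diagram of `A'` and the equations identifying `i a` with `j a`. A
finite part of this theory is realized in `B` itself: conjoin its finitely many `A'`-formulas and
quantify existentially the parameters outside `A`; the result holds in `A'` at parameters from
`A`, hence in `A` because `A ⪯ A'`, and each conjunct transfers from the witnesses in `A` to `B`
because `A ⪯ₙ B`. A model of the whole theory is `B'`. Empty `B` is treated apart, since
compactness only produces nonempty models. -/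

open Language

variable {L}

mutual

theorem IsEx.isFinitary {m k : ℕ} {φ : InfForm L k} : IsEx L m φ → InfForm.IsFinitary L φ
  | .equal t₁ t₂ => .equal t₁ t₂
  | .rel R ts => .rel R ts
  | .not h => .not h.isFinitary
  | .disj hι h => .disj hι fun s => (h s).isFinitary
  | .conj hι h => .conj hι fun s => (h s).isFinitary
  | .ex h _ => .ex h.isFinitary
  | .exStep h => .ex h.isFinitary

theorem IsAll.isFinitary {m k : ℕ} {φ : InfForm L k} : IsAll L m φ → InfForm.IsFinitary L φ
  | .equal t₁ t₂ => .equal t₁ t₂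
  | .rel R ts => .rel R ts
  | .not h => .not h.isFinitary
  | .disj hι h => .disj hι fun s => (h s).isFinitary
  | .conj hι h => .conj hι fun s => (h s).isFinitary
  | .all h _ => .all h.isFinitary
  | .allStep h => .all h.isFinitary

end

theorem isFinitary_of_isEx_or_isAll {n k : ℕ} {φ : InfForm L k}
    (h : IsEx L n φ ∨ IsAll L n φ) : InfForm.IsFinitary L φ :=
  h.elim IsEx.isFinitary IsAll.isFinitary

theorem isEx_or_isAll_not {n k : ℕ} {φ : InfForm L k} (h : IsEx L n φ ∨ IsAll L n φ) :
    IsEx L n φ.not ∨ IsAll L n φ.not :=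
  h.symm.imp .not .not

def InfForm.relabel : ∀ {k m : ℕ}, (Fin k → Fin m) → InfForm L k → InfForm L m
  | _, _, f, .equal t₁ t₂ => .equal (t₁.relabel f) (t₂.relabel f)
  | _, _, f, .rel R ts => .rel R fun l => (ts l).relabel f
  | _, _, f, .not φ => .not (φ.relabel f)
  | _, _, f, .disj Φ => .disj fun s => (Φ s).relabel f
  | _, _, f, .conj Φ => .conj fun s => (Φ s).relabel f
  | _, m, f, .ex φ => .ex (φ.relabel (Fin.snoc (Fin.castSucc ∘ f) (Fin.last m)))
  | _, m, f, .all φ => .all (φ.relabel (Fin.snoc (Fin.castSucc ∘ f) (Fin.last m)))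

theorem InfForm.IsFinitary.relabel {k m : ℕ} {φ : InfForm L k} (h : InfForm.IsFinitary L φ)
    (f : Fin k → Fin m) : InfForm.IsFinitary L (φ.relabel f) := by
  induction h generalizing m with
  | equal t₁ t₂ => exact .equal _ _
  | rel R ts => exact .rel _ _
  | not _ ih => exact .not (ih f)
  | disj hι _ ih => exact .disj hι fun s => ih s f
  | conj hι _ ih => exact .conj hι fun s => ih s f
  | ex _ ih => exact .ex (ih _)
  | all _ ih => exact .all (ih _)

theorem realize_relabel {M : Type u} (S : L.Structure M) :
    ∀ {k m : ℕ} (f : Fin k → Fin m) (φ : InfForm L k) (v : Fin m → M),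
      Realize (φ.relabel f) M S v ↔ Realize φ M S (v ∘ f)
  | _, _, f, .equal t₁ t₂, v => by simp [InfForm.relabel, Realize, Term.realize_relabel]
  | _, _, f, .rel R ts, v => by simp [InfForm.relabel, Realize, Term.realize_relabel]
  | _, _, f, .not φ, v => not_congr (realize_relabel S f φ v)
  | _, _, f, .disj Φ, v => exists_congr fun s => realize_relabel S f (Φ s) v
  | _, _, f, .conj Φ, v => forall_congr' fun s => realize_relabel S f (Φ s) v
  | _, _, f, .ex φ, v => exists_congr fun b => by
      rw [realize_relabel S _ φ, Fin.comp_snoc, ← Function.comp_assoc, Fin.snoc_comp_castSucc,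
        Fin.snoc_last]
  | _, _, f, .all φ, v => forall_congr' fun b => by
      rw [realize_relabel S _ φ, Fin.comp_snoc, ← Function.comp_assoc, Fin.snoc_comp_castSucc,
        Fin.snoc_last]

def InfForm.exs : ∀ (m : ℕ) {r : ℕ}, InfForm L (r + m) → InfForm L r
  | 0, _, φ => φ
  | m + 1, _, φ => exs m φ.ex

theorem InfForm.IsFinitary.exs {m r : ℕ} {φ : InfForm L (r + m)} (h : InfForm.IsFinitary L φ) :
    InfForm.IsFinitary L (φ.exs m) := by
  induction m with
  | zero => exact h
  | succ m ih => exact ih (.ex h)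

theorem realize_exs {M : Type u} (S : L.Structure M) :
    ∀ (m : ℕ) {r : ℕ} (φ : InfForm L (r + m)) (v : Fin r → M),
      Realize (φ.exs m) M S v ↔ ∃ w : Fin m → M, Realize φ M S (Fin.append v w)
  | 0, _, φ, v => by
      have hv : ∀ w : Fin 0 → M, Fin.append v w = v := fun w => by
        rw [Subsingleton.elim w Fin.elim0, Fin.append_elim0]; rfl
      simp only [InfForm.exs, hv, exists_const]
  | m + 1, _, φ, v => by
      simp only [InfForm.exs, realize_exs S m φ.ex v, Realize, ← Fin.append_snoc]
      exact ⟨fun ⟨w, b, h⟩ => ⟨Fin.snoc w b, h⟩,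
        fun ⟨w, h⟩ => ⟨Fin.init w, w (Fin.last m), by rwa [Fin.snoc_init_self]⟩⟩

theorem InfForm.IsFinitary.exists_boundedFormula {k : ℕ} {φ : InfForm L k}
    (h : InfForm.IsFinitary L φ) :
    ∃ F : L.BoundedFormula Empty k, ∀ (M : Type u) (S : L.Structure M) (v : Fin k → M),
      Realize φ M S v ↔ @BoundedFormula.Realize L M S Empty k F Empty.elim v := by
  induction h with
  | equal t₁ t₂ =>
      exact ⟨(t₁.relabel Sum.inr).bdEqual (t₂.relabel Sum.inr), fun M S v => by
        simp only [Realize, BoundedFormula.realize_bdEqual, Term.realize_relabel,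
          Sum.elim_comp_inr]⟩
  | rel R ts =>
      exact ⟨R.boundedFormula fun l => (ts l).relabel Sum.inr, fun M S v => by
        simp only [Realize, BoundedFormula.realize_rel, Term.realize_relabel, Sum.elim_comp_inr]⟩
  | not _ ih =>
      obtain ⟨F, hF⟩ := ih
      exact ⟨F.not, fun M S v => (not_congr (hF M S v)).trans BoundedFormula.realize_not.symm⟩
  | @disj _ ι _ Φ _ ih =>
      choose F hF using ih
      have := Fintype.ofFinite ι
      refine ⟨BoundedFormula.iSup F, fun M S v => ?_⟩
      simp only [Realize, BoundedFormula.realize_iSup, hF]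
  | @conj _ ι _ Φ _ ih =>
      choose F hF using ih
      have := Fintype.ofFinite ι
      refine ⟨BoundedFormula.iInf F, fun M S v => ?_⟩
      simp only [Realize, BoundedFormula.realize_iInf, hF]
  | ex _ ih =>
      obtain ⟨F, hF⟩ := ih
      exact ⟨F.ex, fun M S v => (exists_congr fun b => hF M S _).trans
        BoundedFormula.realize_ex.symm⟩
  | all _ ih =>
      obtain ⟨F, hF⟩ := ih
      exact ⟨F.all, fun M S v => (forall_congr' fun b => hF M S _).trans
        BoundedFormula.realize_all.symm⟩

theorem InfForm.IsFinitary.exists_sentence {X : Type u} {k : ℕ} {φ : InfForm L k}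
    (h : InfForm.IsFinitary L φ) (c : Fin k → X) :
    ∃ σ : L[[X]].Sentence, ∀ (M : Type u) [L[[X]].Structure M],
      σ.Realize M ↔
        Realize φ M ((L.lhomWithConstants X).reduct M) fun l => (L.con (c l) : M) := by
  obtain ⟨F, hF⟩ := h.exists_boundedFormula
  refine ⟨Formula.equivSentence ((F.toFormula.relabel (Sum.elim Empty.elim id)).relabel c),
    fun M _ => ?_⟩
  let : L.Structure M := (L.lhomWithConstants X).reduct M
  have : (L.lhomWithConstants X).IsExpansionOn M := LHom.isExpansionOn_reduct _ _
  rw [Formula.realize_equivSentence, Formula.realize_relabel, Formula.realize_relabel,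
    BoundedFormula.realize_toFormula, hF, iff_iff_eq]
  congr 1
  funext e
  exact e.elim

variable (L) in
/-- Formulas whose free variables are instantiated by constants from `X`. -/
abbrev ParamFormula (X : Type u) : Type (u + 1) := Σ k, InfForm L k × (Fin k → X)

def ParamFormula.Realize {X : Type u} (c : ParamFormula L X) (M : Type u) (S : L.Structure M)
    (e : X → M) : Prop :=
  InfinitaryForcing.Realize c.2.1 M S (e ∘ c.2.2)

theorem exists_realize_of_forall_finset_realize {X : Type u} [Nonempty X]
    (T : Set (ParamFormula L X)) (hT : ∀ c ∈ T, InfForm.IsFinitary L c.2.1)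
    (hfin : ∀ T0 : Finset (ParamFormula L X), ↑T0 ⊆ T →
      ∃ (M : Type u) (S : L.Structure M) (e : X → M), ∀ c ∈ T0, c.Realize M S e) :
    ∃ (M : Type u) (S : L.Structure M) (e : X → M), ∀ c ∈ T, c.Realize M S e := by
  classical
  have hsent (c : ParamFormula L X) : ∃ σ : L[[X]].Sentence, c ∈ T → ∀ (M : Type u)
      [L[[X]].Structure M], σ.Realize M ↔
        c.Realize M ((L.lhomWithConstants X).reduct M) fun x => (L.con x : M) := by
    by_cases hc : c ∈ T
    · exact ((hT c hc).exists_sentence c.2.2).imp fun _ h _ => h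
    · exact ⟨⊥, fun h => absurd h hc⟩
  choose σ hσ using hsent
  obtain ⟨M⟩ : Theory.IsSatisfiable (σ '' T : L[[X]].Theory) := by
    refine Theory.isSatisfiable_iff_isFinitelySatisfiable.2 fun T0' hT0' => ?_
    obtain ⟨T0, hT0, rfl⟩ := Finset.subset_set_image_iff.1 hT0'
    obtain ⟨M, S, e, he⟩ := hfin T0 hT0
    have : Nonempty M := ⟨e (Classical.arbitrary X)⟩
    let _ : L[[X]].Structure M := @Language.sumStructure _ _ M S (constantsOn.structure e)
    have : M ⊨ (↑(T0.image σ) : L[[X]].Theory) := by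
      refine (Theory.model_iff _).2 fun ψ hψ => ?_
      obtain ⟨c, hc, rfl⟩ := Finset.mem_image.1 hψ
      exact (hσ c (hT0 hc) M).2 (he c hc)
    exact Theory.Model.isSatisfiable M
  exact ⟨M, (L.lhomWithConstants X).reduct M, fun x => (L.con x : M),
    fun c hc => (hσ c hc M).1 (M.is_model.realize_of_mem _ ⟨c, hc, rfl⟩)⟩

def diagram {M X : Type u} (P : ∀ k, InfForm L k → Prop) (S : L.Structure M) (κ : M → X) :
    Set (ParamFormula L X) :=
  {c | ∃ (k : ℕ) (φ : InfForm L k) (v : Fin k → M), P k φ ∧ Realize φ M S v ∧ c = ⟨k, φ, κ ∘ v⟩}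

theorem realize_iff_of_forall_mem_diagram {M N X : Type u} {P : ∀ k, InfForm L k → Prop}
    (hP : ∀ k φ, P k φ → P k φ.not) {SM : L.Structure M} {SN : L.Structure N} {κ : M → X}
    {e : X → N} (he : ∀ c ∈ diagram P SM κ, c.Realize N SN e) {k : ℕ} {φ : InfForm L k}
    (hφ : P k φ) (v : Fin k → M) :
    Realize φ M SM v ↔ Realize φ N SN fun l => e (κ (v l)) := by
  refine ⟨fun h => he _ ⟨k, φ, v, hφ, h, rfl⟩, fun h => ?_⟩
  by_contra hn
  exact he _ ⟨k, φ.not, v, hP k φ hφ, hn, rfl⟩ h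

theorem exists_injective_fin_factorization {α κ : Type*} [Finite κ] (x : κ → α) :
    ∃ (m : ℕ) (u : Fin m → α) (τ : κ → Fin m), Function.Injective u ∧ ∀ c, u (τ c) = x c := by
  obtain ⟨m, ⟨e⟩⟩ := Finite.exists_equiv_fin (Set.range x)
  exact ⟨m, fun q => e.symm q, fun c => e ⟨x c, c, rfl⟩,
    Subtype.val_injective.comp e.symm.injective, fun c => by simp⟩

theorem IsElemMap.exists_witnesses {A A' : Type u} {SA : L.Structure A} {SA' : L.Structure A'}
    {j : A → A'} (hj : IsElemMap L SA SA' j) {ι : Type*} [Finite ι] {r m : ℕ}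
    {φ : ι → InfForm L (r + m)} (hφ : ∀ s, InfForm.IsFinitary L (φ s)) (a : Fin r → A)
    (u : Fin m → A') (hu : ∀ s, Realize (φ s) A' SA' (Fin.append (j ∘ a) u)) :
    ∃ w : Fin m → A, ∀ s, Realize (φ s) A SA (Fin.append a w) := by
  obtain ⟨N, ⟨e⟩⟩ := Finite.exists_equiv_fin ι
  -- `InfForm.conj` needs an index type in `Type u`, which `ι` need not be.
  let Φ : InfForm L (r + m) := .conj fun q : ULift.{u} (Fin N) => φ (e.symm q.down)
  have hΦ : InfForm.IsFinitary L (Φ.exs m) := (InfForm.IsFinitary.conj inferInstance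
    fun q => hφ _).exs
  have hA : Realize (Φ.exs m) A SA a :=
    (hj r _ hΦ a).2 ((realize_exs SA' m Φ _).2 ⟨u, fun q => hu _⟩)
  obtain ⟨w, hw⟩ := (realize_exs SA m Φ a).1 hA
  exact ⟨w, fun s => by simpa using hw ⟨e s⟩⟩

section Amalgamation

variable {n : ℕ} {A B A' : Type u} {SA : L.Structure A} {SB : L.Structure B}
  {SA' : L.Structure A'} {i : A → B} {j : A → A'}

theorem exists_map_realizing_finite_diagram [Nonempty B] (hi : IsNElemMap L n SA SB i)
    (hj : IsElemMap L SA SA' j) {ι γ : Type*} [Finite ι] [Finite γ] {k : ι → ℕ}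
    {φ : ∀ s, InfForm L (k s)} (hφ : ∀ s, IsEx L n (φ s) ∨ IsAll L n (φ s))
    (v : ∀ s, Fin (k s) → A') (hv : ∀ s, Realize (φ s) A' SA' (v s)) (a : γ → A) :
    ∃ q : A' → B, (∀ s, Realize (φ s) B SB (q ∘ v s)) ∧ ∀ c, q (j (a c)) = i (a c) := by
  obtain ⟨r, ⟨eγ⟩⟩ := Finite.exists_equiv_fin γ
  obtain ⟨m, u, τ, hu, hτ⟩ := exists_injective_fin_factorization
    (Sum.elim (fun p : Σ s, Fin (k s) => v p.1 p.2) (j ∘ a))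
  have hτv (s : ι) (l : Fin (k s)) : u (τ (.inl ⟨s, l⟩)) = v s l := hτ _
  have hτa (c : γ) : u (τ (.inr c)) = j (a c) := hτ _
  -- `a` enters as parameters, and the equations force the witnesses for `j ∘ a` to be `a`.
  let Φ : ι ⊕ γ → InfForm L (r + m)
    | .inl s => (φ s).relabel fun l => Fin.natAdd r (τ (.inl ⟨s, l⟩))
    | .inr c => .equal (.var (Fin.castAdd m (eγ c))) (.var (Fin.natAdd r (τ (.inr c))))
  have hΦ : ∀ x, InfForm.IsFinitary L (Φ x)
    | .inl s => (isFinitary_of_isEx_or_isAll (hφ s)).relabel _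
    | .inr c => .equal _ _
  have hA' : ∀ x, Realize (Φ x) A' SA' (Fin.append (j ∘ a ∘ eγ.symm) u)
    | .inl s => by
        simp only [Φ, realize_relabel]
        convert hv s using 2
        funext l
        simp [hτv]
    | .inr c => by
        simpa [Φ, Realize] using (hτa c).symm
  obtain ⟨w, hw⟩ := hj.exists_witnesses hΦ (a ∘ eγ.symm) u hA'
  let q := Function.extend u (i ∘ w) fun _ => Classical.arbitrary B
  have hq : ∀ l, q (u l) = i (w l) := hu.extend_apply _ _
  refine ⟨q, fun s => ?_, fun c => ?_⟩
  · have hs := (realize_relabel SA _ (φ s) _).1 (hw (.inl s))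
    convert (hi _ _ (hφ s) _).1 hs using 2 with l
    simp [← hτv s l, hq]
  · have hc : a c = w (τ (.inr c)) := by simpa [Φ, Realize] using hw (.inr c)
    rw [← hτa c, hq, hc]

variable (n SB SA' i j) in
def amalgamDiagram : Set (ParamFormula L (B ⊕ A')) :=
  diagram (fun _ φ => InfForm.IsFinitary L φ) SB Sum.inl ∪
    diagram (fun _ φ => IsEx L n φ ∨ IsAll L n φ) SA' Sum.inr ∪
    Set.range fun a => ⟨2, .equal (.var 0) (.var 1), ![Sum.inl (i a), Sum.inr (j a)]⟩

theorem isFinitary_of_mem_amalgamDiagram {c : ParamFormula L (B ⊕ A')}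
    (hc : c ∈ amalgamDiagram n SB SA' i j) : InfForm.IsFinitary L c.2.1 := by
  rcases hc with (⟨k, φ, v, hφ, -, rfl⟩ | ⟨k, φ, v, hφ, -, rfl⟩) | ⟨a, rfl⟩
  · exact hφ
  · exact isFinitary_of_isEx_or_isAll hφ
  · exact .equal _ _

theorem exists_realize_of_subset_amalgamDiagram [Nonempty B] (hi : IsNElemMap L n SA SB i)
    (hj : IsElemMap L SA SA' j) (T0 : Finset (ParamFormula L (B ⊕ A')))
    (hT0 : ↑T0 ⊆ amalgamDiagram n SB SA' i j) :
    ∃ q : A' → B, ∀ c ∈ T0, c.Realize B SB (Sum.elim id q) := by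
  let ι := {c : T0 // c.1 ∈ diagram (fun _ φ => IsEx L n φ ∨ IsAll L n φ) SA' Sum.inr}
  let γ := {c : T0 // c.1 ∈ Set.range fun a => (⟨2, .equal (.var 0) (.var 1),
    ![Sum.inl (i a), Sum.inr (j a)]⟩ : ParamFormula L (B ⊕ A'))}
  choose k φ v hφ hv hc using fun s : ι => s.2
  choose a ha using fun c : γ => c.2
  obtain ⟨q, hqφ, hqa⟩ := exists_map_realizing_finite_diagram hi hj hφ v hv a
  refine ⟨q, fun c hc0 => ?_⟩
  rcases hT0 hc0 with (⟨k, φ, v, -, hv, rfl⟩ | hA') | hglue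
  · exact hv
  · rw [show c = _ from hc ⟨⟨c, hc0⟩, hA'⟩]
    exact hqφ _
  · rw [show c = _ from (ha ⟨⟨c, hc0⟩, hglue⟩).symm]
    simpa [ParamFormula.Realize, Realize] using (hqa _).symm

theorem exists_amalgam_of_isEmpty [IsEmpty B] (hi : IsNElemMap L n SA SB i)
    (hj : IsElemMap L SA SA' j) :
    ∃ (B' : Type u) (SB' : L.Structure B') (g : B → B') (h : A' → B'),
      IsElemMap L SB SB' g ∧ IsNElemMap L n SA' SB' h ∧ ∀ a : A, g (i a) = h (j a) := by
  have : IsEmpty A := ⟨fun a => isEmptyElim (i a)⟩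
  have : IsEmpty A' := ⟨fun x => by
    obtain ⟨a, -⟩ := (hj 0 (.ex (.equal (.var 0) (.var 0))) (.ex (.equal _ _)) Fin.elim0).2
      ⟨x, rfl⟩
    exact isEmptyElim a⟩
  refine ⟨B, SB, id, isEmptyElim, fun _ _ _ _ => Iff.rfl, fun k φ hφ v => ?_, isEmptyElim⟩
  let v₀ : Fin k → A := fun l => isEmptyElim (v l)
  have hv : v = j ∘ v₀ := funext fun l => isEmptyElim (v l)
  have hv' : (fun l => (isEmptyElim (v l) : B)) = i ∘ v₀ := funext fun l => isEmptyElim (v l)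
  rw [hv', hv]
  exact (hj k φ (isFinitary_of_isEx_or_isAll hφ) v₀).symm.trans (hi k φ hφ v₀)

end Amalgamation

/-- Amalgamation of `n`-elementary and elementary extensions: if `A ⪯ₙ B` and
`A ⪯ A′`, there is `B′` with an elementary embedding of `B` into `B′` and an
`n`-elementary embedding of `A′` into `B′` compatible with the inclusions of `A`. -/
theorem stmt2 {L : FirstOrder.Language.{u, u}} (n : ℕ) {A B A' : Type u}
    (SA : L.Structure A) (SB : L.Structure B) (SA' : L.Structure A')
    (i : A → B) (hi : IsNElemMap L n SA SB i)
    (j : A → A') (hj : IsElemMap L SA SA' j) :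
    ∃ (B' : Type u) (SB' : L.Structure B') (g : B → B') (h : A' → B'),
      IsElemMap L SB SB' g ∧ IsNElemMap L n SA' SB' h ∧
      ∀ a : A, g (i a) = h (j a) := by
  rcases isEmpty_or_nonempty B with hB | hB
  · exact exists_amalgam_of_isEmpty hi hj
  obtain ⟨M, S, e, he⟩ := exists_realize_of_forall_finset_realize (amalgamDiagram n SB SA' i j)
    (fun _ => isFinitary_of_mem_amalgamDiagram) fun T0 hT0 =>
      let ⟨q, hq⟩ := exists_realize_of_subset_amalgamDiagram hi hj T0 hT0
      ⟨B, SB, _, hq⟩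
  refine ⟨M, S, e ∘ Sum.inl, e ∘ Sum.inr, fun k φ hφ v => ?_, fun k φ hφ v => ?_, fun a => ?_⟩
  · exact realize_iff_of_forall_mem_diagram (P := fun _ φ => InfForm.IsFinitary L φ)
      (fun _ _ => .not) (fun c hc => he c (.inl (.inl hc))) hφ v
  · exact realize_iff_of_forall_mem_diagram (P := fun _ φ => IsEx L n φ ∨ IsAll L n φ)
      (fun _ _ => isEx_or_isAll_not) (fun c hc => he c (.inl (.inr hc))) hφ v
  · simpa [ParamFormula.Realize, Realize] using he _ (.inr ⟨a, rfl⟩)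

end InfinitaryForcing
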